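/- Let d ∈ {2,3}, ρ > 0, h > 0, a > 0, ε > 0 with ε²a² < h, and let v, H ∈ ℝ^d with ε²|v|² < 1. Then the (2d+2)×(2d+2) matrices B₀(V), B₁(V), …, B_d(V) of the symmetrized ideal relativistic MHD system are all symmetric, and B₀(V) is positive definite. -/

import Mathlib

open Matrix

/-- The Lorentz factor `Γ = (1 − ε²|v|²)^{−1/2}`. -/
noncomputable def lorentz (d : ℕ) (ε : ℝ) (v : Fin d → ℝ) : ℝ :=
  (Real.sqrt (1 - ε ^ 2 * ∑ i, v i ^ 2))⁻¹

/-- `|b|² = ε²Γ⁻²|H|² + ε⁴(v·H)²`, the Minkowski norm squared of the magnetic field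
`d`-vector. -/
noncomputable def bsq (d : ℕ) (ε : ℝ) (v H : Fin d → ℝ) : ℝ :=
  ε ^ 2 * (lorentz d ε v)⁻¹ ^ 2 * (∑ i, H i ^ 2) + ε ^ 4 * (∑ i, v i * H i) ^ 2

/-- `M₀ = Γ⁻¹(I_d + ε²Γ² v⊗v)`. -/
noncomputable def M0rel (d : ℕ) (ε : ℝ) (v : Fin d → ℝ) : Matrix (Fin d) (Fin d) ℝ :=
  (lorentz d ε v)⁻¹ • ((1 : Matrix (Fin d) (Fin d) ℝ)
    + (ε ^ 2 * lorentz d ε v ^ 2) • vecMulVec v v)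

/-- `𝒜₀`, the velocity block of the relativistic MHD symmetrizer `B₀(V)`. -/
noncomputable def calA0 (d : ℕ) (ε ρ h : ℝ) (v H : Fin d → ℝ) :
    Matrix (Fin d) (Fin d) ℝ :=
  (ρ * h * lorentz d ε v + ε ^ 2 * (lorentz d ε v)⁻¹ * ∑ i, H i ^ 2) •
      ((1 : Matrix (Fin d) (Fin d) ℝ) - ε ^ 2 • vecMulVec v v)
    - (ε ^ 2 * (lorentz d ε v)⁻¹ * bsq d ε v H) • vecMulVec v v
    - (ε ^ 2 * (lorentz d ε v)⁻¹) • vecMulVec H H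
    + (ε ^ 4 * (lorentz d ε v)⁻¹ * ∑ i, v i * H i) • (vecMulVec H v + vecMulVec v H)

/-- `𝒜ᵢ`, the velocity block of `Bᵢ(V)`, `i = 1, …, d`. -/
noncomputable def calAi (d : ℕ) (ε ρ h : ℝ) (v H : Fin d → ℝ) (i : Fin d) :
    Matrix (Fin d) (Fin d) ℝ :=
  v i • ((ρ * h * lorentz d ε v + ε ^ 2 * (lorentz d ε v)⁻¹ * ∑ j, H j ^ 2) •
        ((1 : Matrix (Fin d) (Fin d) ℝ) - ε ^ 2 • vecMulVec v v)
      + (ε ^ 2 * (lorentz d ε v)⁻¹) • (bsq d ε v H • vecMulVec v v - vecMulVec H H))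
    + (ε ^ 2 * (lorentz d ε v)⁻¹ * H i) •
        (((lorentz d ε v)⁻¹ ^ 2) • (vecMulVec H v + vecMulVec v H)
          - (2 * ∑ j, v j * H j) •
              ((1 : Matrix (Fin d) (Fin d) ℝ) - ε ^ 2 • vecMulVec v v))
    + (lorentz d ε v)⁻¹ •
        vecMulVec ((ε ^ 2 * ∑ j, v j * H j) • H - bsq d ε v H • v) (Pi.single i 1)
    + (lorentz d ε v)⁻¹ •
        vecMulVec (Pi.single i 1) ((ε ^ 2 * ∑ j, v j * H j) • H - bsq d ε v H • v)

/-- `𝒩ᵢ = (Γ⁻²H + ε²(v·H)v)⊗(eᵢ − ε²vᵢv) − Γ⁻²Hᵢ I_d`. -/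
noncomputable def calNi (d : ℕ) (ε : ℝ) (v H : Fin d → ℝ) (i : Fin d) :
    Matrix (Fin d) (Fin d) ℝ :=
  vecMulVec (((lorentz d ε v)⁻¹ ^ 2) • H + (ε ^ 2 * ∑ j, v j * H j) • v)
      (Pi.single i 1 - (ε ^ 2 * v i) • v)
    - ((lorentz d ε v)⁻¹ ^ 2 * H i) • (1 : Matrix (Fin d) (Fin d) ℝ)

/-- Index type for the `(2d+2) × (2d+2)` matrices of the symmetrized ideal relativistic MHD
system, blocks of sizes `1, d, d, 1`. -/
abbrev RMHDIdx (d : ℕ) := Unit ⊕ Fin d ⊕ Fin d ⊕ Unit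

/-- The symmetrizer `B₀(V)` of ideal relativistic MHD. -/
noncomputable def B0mat (d : ℕ) (ε ρ h a : ℝ) (v H : Fin d → ℝ) :
    Matrix (RMHDIdx d) (RMHDIdx d) ℝ :=
  Matrix.of fun p q =>
    match p, q with
    | Sum.inl _, Sum.inl _ => lorentz d ε v / (ρ * a ^ 2)
    | Sum.inl _, Sum.inr (Sum.inl j) => ε ^ 2 * v j
    | Sum.inr (Sum.inl i), Sum.inl _ => ε ^ 2 * v i
    | Sum.inr (Sum.inl i), Sum.inr (Sum.inl j) => calA0 d ε ρ h v H i j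
    | Sum.inr (Sum.inr (Sum.inl i)), Sum.inr (Sum.inr (Sum.inl j)) => M0rel d ε v i j
    | Sum.inr (Sum.inr (Sum.inr _)), Sum.inr (Sum.inr (Sum.inr _)) => 1
    | _, _ => 0

/-- The matrices `Bᵢ(V)`, `i = 1, …, d`, of the symmetrized ideal relativistic MHD system. -/
noncomputable def Bimat (d : ℕ) (ε ρ h a : ℝ) (v H : Fin d → ℝ) (i : Fin d) :
    Matrix (RMHDIdx d) (RMHDIdx d) ℝ :=
  Matrix.of fun p q =>
    match p, q with
    | Sum.inl _, Sum.inl _ => lorentz d ε v * v i / (ρ * a ^ 2)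
    | Sum.inl _, Sum.inr (Sum.inl j) => if i = j then 1 else 0
    | Sum.inr (Sum.inl j), Sum.inl _ => if i = j then 1 else 0
    | Sum.inr (Sum.inl j), Sum.inr (Sum.inl k) => calAi d ε ρ h v H i j k
    | Sum.inr (Sum.inl j), Sum.inr (Sum.inr (Sum.inl k)) => calNi d ε v H i k j
    | Sum.inr (Sum.inr (Sum.inl j)), Sum.inr (Sum.inl k) => calNi d ε v H i j k
    | Sum.inr (Sum.inr (Sum.inl j)), Sum.inr (Sum.inr (Sum.inl k)) => v i * M0rel d ε v j k
    | Sum.inr (Sum.inr (Sum.inr _)), Sum.inr (Sum.inr (Sum.inr _)) => v i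
    | _, _ => 0

/-- The Jacobian `𝐉 = ∂V/∂U` of the change of unknowns `U = (q, v, H, S) ↦ V = (p, w, H, S)`
in ideal relativistic MHD, with `𝐚 = ε²(|H|²v − (v·H)H)` and `𝐛 = Γ⁻²H + ε²(v·H)v`. -/
noncomputable def Jac (d : ℕ) (ε : ℝ) (v H : Fin d → ℝ) :
    Matrix (RMHDIdx d) (RMHDIdx d) ℝ :=
  Matrix.of fun p q =>
    match p, q with
    | Sum.inl _, Sum.inl _ => 1
    | Sum.inl _, Sum.inr (Sum.inl j) =>
        ε ^ 2 * ((∑ k, H k ^ 2) * v j - (∑ k, v k * H k) * H j)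
    | Sum.inl _, Sum.inr (Sum.inr (Sum.inl j)) =>
        -((lorentz d ε v)⁻¹ ^ 2 * H j + ε ^ 2 * (∑ k, v k * H k) * v j)
    | Sum.inr (Sum.inl i), Sum.inr (Sum.inl j) => lorentz d ε v ^ 2 * M0rel d ε v i j
    | Sum.inr (Sum.inr (Sum.inl i)), Sum.inr (Sum.inr (Sum.inl j)) => if i = j then 1 else 0
    | Sum.inr (Sum.inr (Sum.inr _)), Sum.inr (Sum.inr (Sum.inr _)) => 1
    | _, _ => 0

/-!
Symmetry is entrywise bookkeeping. For definiteness split a vector along the blocks as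
`(s, y, z, t)`. With `w = ε²(v·y)v − y` and `Γ⁻² = 1 − ε²|v|²`, the quadratic form of `𝒜₀` equals
`ρhΓ(|y|² − ε²(v·y)²) + ε²Γ⁻¹(|H|²|w|² − (H·w)²)`, whose magnetic part is nonnegative by
Cauchy–Schwarz. Completing the square in `s` and using `ε²(v·y)² ≤ (1 − Γ⁻²)|y|²` leaves at least
`ρΓ⁻¹(h − ε²a²)|y|²`, which is positive for subluminal sound speed, while `M₀` contributes at
least `Γ⁻¹|z|²`.
-/

section DotProduct

variable {n : Type*} [Fintype n]

lemma sum_sq_eq_dotProduct_self (u : n → ℝ) : ∑ i, u i ^ 2 = u ⬝ᵥ u := by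
  simp [dotProduct, sq]

lemma dotProduct_self_nonneg (u : n → ℝ) : 0 ≤ u ⬝ᵥ u :=
  Finset.sum_nonneg fun i _ => mul_self_nonneg (u i)

lemma dotProduct_self_pos {u : n → ℝ} (hu : u ≠ 0) : 0 < u ⬝ᵥ u := by
  simpa using dotProduct_self_star_pos_iff.2 hu

lemma sq_dotProduct_le (u w : n → ℝ) : (u ⬝ᵥ w) ^ 2 ≤ (u ⬝ᵥ u) * (w ⬝ᵥ w) := by
  simpa only [dotProduct, sq] using Finset.sum_mul_sq_le_sq_mul_sq Finset.univ u w

lemma dotProduct_vecMulVec_mulVec (y u w : n → ℝ) :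
    y ⬝ᵥ vecMulVec u w *ᵥ y = (y ⬝ᵥ u) * (w ⬝ᵥ y) := by
  rw [dotProduct_mulVec, vecMul_vecMulVec, smul_dotProduct, smul_eq_mul]

end DotProduct

section Lorentz

variable {d : ℕ} {ε : ℝ} {v : Fin d → ℝ}

lemma lorentz_nonneg : 0 ≤ lorentz d ε v :=
  inv_nonneg.mpr (Real.sqrt_nonneg _)

lemma lorentz_pos (hv : ε ^ 2 * ∑ i, v i ^ 2 < 1) : 0 < lorentz d ε v :=
  inv_pos.mpr (Real.sqrt_pos.mpr (by linarith))

lemma inv_lorentz_sq (hv : ε ^ 2 * ∑ i, v i ^ 2 < 1) :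
    (lorentz d ε v)⁻¹ ^ 2 = 1 - ε ^ 2 * (v ⬝ᵥ v) := by
  rw [lorentz, inv_inv, Real.sq_sqrt (by linarith), sum_sq_eq_dotProduct_self]

end Lorentz

section Symmetry

variable (d : ℕ) (ε ρ h a : ℝ) (v H : Fin d → ℝ)

lemma M0rel_isSymm : (M0rel d ε v).IsSymm := by
  simp [IsSymm, M0rel, transpose_vecMulVec]

lemma calA0_isSymm : (calA0 d ε ρ h v H).IsSymm := by
  simp [IsSymm, calA0, transpose_vecMulVec, add_comm]

lemma calAi_isSymm (i : Fin d) : (calAi d ε ρ h v H i).IsSymm := by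
  simp [IsSymm, calAi, transpose_vecMulVec, add_comm, add_left_comm]

lemma B0mat_isSymm : (B0mat d ε ρ h a v H).IsSymm := by
  refine IsSymm.ext fun p q => ?_
  rcases p with _ | p | p | _ <;> rcases q with _ | q | q | _ <;>
    simp [B0mat, (calA0_isSymm d ε ρ h v H).apply, (M0rel_isSymm d ε v).apply]

lemma Bimat_isSymm (i : Fin d) : (Bimat d ε ρ h a v H i).IsSymm := by
  refine IsSymm.ext fun p q => ?_
  rcases p with _ | p | p | _ <;> rcases q with _ | q | q | _ <;>
    simp [Bimat, (calAi_isSymm d ε ρ h v H i).apply, (M0rel_isSymm d ε v).apply]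

end Symmetry

section QuadraticForms

variable {d : ℕ} (ε ρ h : ℝ) (v H y : Fin d → ℝ)

lemma le_M0rel_quadForm : (lorentz d ε v)⁻¹ * (y ⬝ᵥ y) ≤ y ⬝ᵥ M0rel d ε v *ᵥ y := by
  simp only [M0rel, smul_mulVec, add_mulVec, one_mulVec, dotProduct_smul,
    dotProduct_add, dotProduct_vecMulVec_mulVec, smul_eq_mul, dotProduct_comm y v]
  exact mul_le_mul_of_nonneg_left
    (le_add_of_nonneg_right (mul_nonneg (by positivity) (mul_self_nonneg _)))
    (inv_nonneg.2 lorentz_nonneg)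

lemma calA0_quadForm (hv : ε ^ 2 * ∑ i, v i ^ 2 < 1) :
    y ⬝ᵥ calA0 d ε ρ h v H *ᵥ y =
      ρ * h * lorentz d ε v * (y ⬝ᵥ y - ε ^ 2 * (v ⬝ᵥ y) ^ 2)
        + ε ^ 2 * (lorentz d ε v)⁻¹ *
          ((H ⬝ᵥ H) * (((ε ^ 2 * (v ⬝ᵥ y)) • v - y) ⬝ᵥ ((ε ^ 2 * (v ⬝ᵥ y)) • v - y))
            - (H ⬝ᵥ ((ε ^ 2 * (v ⬝ᵥ y)) • v - y)) ^ 2) := by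
  have hvH : ∑ i, v i * H i = v ⬝ᵥ H := rfl
  simp only [calA0, bsq, add_mulVec, sub_mulVec, smul_mulVec, one_mulVec, dotProduct_add,
    dotProduct_sub, dotProduct_smul, smul_dotProduct, sub_dotProduct, dotProduct_vecMulVec_mulVec,
    smul_eq_mul, sum_sq_eq_dotProduct_self, hvH, inv_lorentz_sq hv]
  simp only [dotProduct_comm y, dotProduct_comm H v]
  ring

lemma le_calA0_quadForm (hv : ε ^ 2 * ∑ i, v i ^ 2 < 1) :
    ρ * h * lorentz d ε v * (y ⬝ᵥ y - ε ^ 2 * (v ⬝ᵥ y) ^ 2) ≤ y ⬝ᵥ calA0 d ε ρ h v H *ᵥ y := by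
  rw [calA0_quadForm ε ρ h v H y hv, le_add_iff_nonneg_right]
  exact mul_nonneg (mul_nonneg (sq_nonneg ε) (inv_nonneg.2 lorentz_nonneg))
    (sub_nonneg.2 (by rw [mul_comm]; exact sq_dotProduct_le _ _))

end QuadraticForms

def rmhdVec {d : ℕ} (s : ℝ) (y z : Fin d → ℝ) (t : ℝ) : RMHDIdx d → ℝ :=
  Sum.elim (fun _ => s) (Sum.elim y (Sum.elim z fun _ => t))

lemma exists_eq_rmhdVec {d : ℕ} (x : RMHDIdx d → ℝ) : ∃ s y z t, x = rmhdVec s y z t :=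
  ⟨x (.inl ()), fun i => x (.inr (.inl i)), fun i => x (.inr (.inr (.inl i))),
    x (.inr (.inr (.inr ()))), by ext (_ | _ | _ | _) <;> rfl⟩

lemma rmhdVec_zero {d : ℕ} : rmhdVec 0 (0 : Fin d → ℝ) 0 0 = 0 := by
  ext (_ | _ | _ | _) <;> rfl

lemma B0mat_quadForm {d : ℕ} (ε ρ h a : ℝ) (v H : Fin d → ℝ) (s : ℝ) (y z : Fin d → ℝ) (t : ℝ) :
    rmhdVec s y z t ⬝ᵥ B0mat d ε ρ h a v H *ᵥ rmhdVec s y z t =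
      lorentz d ε v / (ρ * a ^ 2) * s ^ 2 + 2 * ε ^ 2 * (v ⬝ᵥ y) * s
        + y ⬝ᵥ calA0 d ε ρ h v H *ᵥ y + z ⬝ᵥ M0rel d ε v *ᵥ z + t ^ 2 := by
  simp only [dotProduct, mulVec, Fintype.sum_sum_type, rmhdVec, B0mat, of_apply, Sum.elim_inl,
    Sum.elim_inr, Finset.univ_unique, Finset.sum_singleton, mul_zero, zero_mul,
    Finset.sum_const_zero, add_zero, zero_add, mul_add, Finset.sum_add_distrib]
  have hcross : ∑ i, y i * (ε ^ 2 * v i * s) = ε ^ 2 * (∑ i, v i * y i) * s := by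
    simp only [Finset.mul_sum, Finset.sum_mul]
    exact Finset.sum_congr rfl fun _ _ => by ring
  have hcross' : s * ∑ i, ε ^ 2 * v i * y i = ε ^ 2 * (∑ i, v i * y i) * s := by
    simp only [Finset.mul_sum, Finset.sum_mul]
    exact Finset.sum_congr rfl fun _ _ => by ring
  rw [hcross, hcross']
  ring

lemma le_fluid_quadForm {ρ h a ε Γ s p Y : ℝ} (hρ : 0 < ρ) (hh : 0 ≤ h) (ha : 0 < a)
    (hΓ : 0 < Γ) (hY : 0 ≤ Y) (hp : ε ^ 2 * p ^ 2 ≤ (1 - Γ⁻¹ ^ 2) * Y) :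
    Γ / (ρ * a ^ 2) * (s + ρ * a ^ 2 * ε ^ 2 * Γ⁻¹ * p) ^ 2 + ρ * Γ⁻¹ * (h - ε ^ 2 * a ^ 2) * Y
      ≤ Γ / (ρ * a ^ 2) * s ^ 2 + 2 * ε ^ 2 * p * s + ρ * h * Γ * (Y - ε ^ 2 * p ^ 2) := by
  have hΓY : Γ⁻¹ ^ 2 * Y ≤ Y - ε ^ 2 * p ^ 2 := by linarith
  have hY' : 0 ≤ Y - ε ^ 2 * p ^ 2 := le_trans (by positivity) hΓY
  have hgap : Γ / (ρ * a ^ 2) * s ^ 2 + 2 * ε ^ 2 * p * s + ρ * h * Γ * (Y - ε ^ 2 * p ^ 2)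
      - (Γ / (ρ * a ^ 2) * (s + ρ * a ^ 2 * ε ^ 2 * Γ⁻¹ * p) ^ 2
        + ρ * Γ⁻¹ * (h - ε ^ 2 * a ^ 2) * Y)
      = ρ * h * Γ * (Y - ε ^ 2 * p ^ 2 - Γ⁻¹ ^ 2 * Y)
        + ρ * a ^ 2 * ε ^ 2 * Γ⁻¹ * (Y - ε ^ 2 * p ^ 2) := by
    field_simp
    ring
  rw [← sub_nonneg, hgap]
  exact add_nonneg (mul_nonneg (by positivity) (sub_nonneg.2 hΓY)) (mul_nonneg (by positivity) hY')

lemma B0mat_quadForm_pos {d : ℕ} {ε ρ h a : ℝ} {v : Fin d → ℝ} (H : Fin d → ℝ) (hρ : 0 < ρ)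
    (hh : 0 ≤ h) (ha : 0 < a) (hsub : ε ^ 2 * a ^ 2 < h) (hv : ε ^ 2 * ∑ i, v i ^ 2 < 1)
    {s t : ℝ} {y z : Fin d → ℝ} (hx : rmhdVec s y z t ≠ 0) :
    0 < rmhdVec s y z t ⬝ᵥ B0mat d ε ρ h a v H *ᵥ rmhdVec s y z t := by
  have hp : ε ^ 2 * (v ⬝ᵥ y) ^ 2 ≤ (1 - (lorentz d ε v)⁻¹ ^ 2) * (y ⬝ᵥ y) := by
    rw [inv_lorentz_sq hv, sub_sub_cancel, mul_assoc]
    exact mul_le_mul_of_nonneg_left (sq_dotProduct_le v y) (sq_nonneg ε)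
  have hfluid := le_fluid_quadForm (s := s) hρ hh ha (lorentz_pos hv) (dotProduct_self_nonneg y) hp
  have hA := le_calA0_quadForm ε ρ h v H y hv
  have hM := le_M0rel_quadForm ε v z
  rw [B0mat_quadForm]
  set Γ := lorentz d ε v
  have hΓ : 0 < Γ := lorentz_pos hv
  have hsub' : 0 < h - ε ^ 2 * a ^ 2 := sub_pos.2 hsub
  have hMz : 0 ≤ Γ⁻¹ * (z ⬝ᵥ z) := mul_nonneg (inv_nonneg.2 hΓ.le) (dotProduct_self_nonneg z)
  have hT1 : 0 ≤ Γ / (ρ * a ^ 2) * (s + ρ * a ^ 2 * ε ^ 2 * Γ⁻¹ * (v ⬝ᵥ y)) ^ 2 := by positivity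
  rcases eq_or_ne y 0 with rfl | hy
  · have hszt : s ≠ 0 ∨ z ≠ 0 ∨ t ≠ 0 := by
      by_contra! h0
      obtain ⟨rfl, rfl, rfl⟩ := h0
      exact hx rmhdVec_zero
    simp only [dotProduct_zero, mulVec_zero, mul_zero, zero_mul, add_zero] at hT1 ⊢
    rcases hszt with hs | hz | ht
    · have : 0 < Γ / (ρ * a ^ 2) * s ^ 2 := by positivity
      linarith [sq_nonneg t]
    · have : 0 < Γ⁻¹ * (z ⬝ᵥ z) := mul_pos (inv_pos.2 hΓ) (dotProduct_self_pos hz)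
      linarith [sq_nonneg t]
    · have : 0 < t ^ 2 := by positivity
      linarith
  · have : 0 < ρ * Γ⁻¹ * (h - ε ^ 2 * a ^ 2) * (y ⬝ᵥ y) :=
      mul_pos (by positivity) (dotProduct_self_pos hy)
    linarith [sq_nonneg t]

theorem stmt12_general (d : ℕ) (ρ h a ε : ℝ)
    (hρ : 0 < ρ) (hh : 0 < h) (ha : 0 < a) (hsub : ε ^ 2 * a ^ 2 < h)
    (v H : Fin d → ℝ) (hv : ε ^ 2 * ∑ i, v i ^ 2 < 1) :
    (B0mat d ε ρ h a v H).IsSymm ∧ (∀ i : Fin d, (Bimat d ε ρ h a v H i).IsSymm) ∧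
      (B0mat d ε ρ h a v H).PosDef := by
  have hB0 := B0mat_isSymm d ε ρ h a v H
  refine ⟨hB0, Bimat_isSymm d ε ρ h a v H, ?_⟩
  refine PosDef.of_dotProduct_mulVec_pos (isHermitian_iff_isSymm.2 hB0) fun x hx => ?_
  obtain ⟨s, y, z, t, rfl⟩ := exists_eq_rmhdVec x
  rw [star_trivial]
  exact B0mat_quadForm_pos H hρ hh.le ha hsub hv hx

/-- The matrices `B₀(V), B₁(V), …, B_d(V)` of the symmetrized ideal relativistic MHD system
are all symmetric, and `B₀(V)` is positive definite. -/
theorem stmt12 (d : ℕ) (hd : d = 2 ∨ d = 3) (ρ h a ε : ℝ)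
    (hρ : 0 < ρ) (hh : 0 < h) (ha : 0 < a) (hε : 0 < ε) (hsub : ε ^ 2 * a ^ 2 < h)
    (v H : Fin d → ℝ) (hv : ε ^ 2 * ∑ i, v i ^ 2 < 1) :
    (B0mat d ε ρ h a v H).IsSymm ∧ (∀ i : Fin d, (Bimat d ε ρ h a v H i).IsSymm) ∧
      (B0mat d ε ρ h a v H).PosDef :=
  stmt12_general d ρ h a ε hρ hh ha hsub v H hv
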